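/- Let k be a field of characteristic 5, R = k[X, Z], q = Z² + X³, and let L = R[1/(X·q)] be the localization of R at the powers of X·q. Let w = τ(Z⁵·X^{−5}·q^{−1}) ∈ W(L) (5-typical Witt vectors). Then there exist u, v ∈ W(L) such that every coefficient of u lies in the image of R[1/X] in L, every coefficient of v lies in the image of R[1/q] in L, and the Witt vector w + V(τ(Z·X^{−1}·q^{−1})) − u − v has vanishing coefficients in degrees 0 and 1. (This is the computation showing that the pullback of the generating local cohomology class along the α₅-quotient with an E₈^0 singularity, given by x = X⁵, y = Z² + X³, z = Z⁵, satisfies π*(ε, 0) ≡ V(−Z/(Xy)) in W₂ modulo W₂(B[1/x]) + W₂(B[1/y]).) -/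

import Mathlib

/-!
In `W₂`, `τ a + τ b = τ (a + b) - V τ (c a b)`, where `c a b = ((a + b)⁵ - a⁵ - b⁵) / 5` is the
carry of Witt vector addition. With `x = X`, `y = Z² + X³`, the splitting
`Z⁵ / (x⁵ y) = (Z³ - Z x³) / x⁵ + Z x / y` of the `0`-th coefficient into an `R[1/x]`-part and an
`R[1/y]`-part therefore reduces the claim to writing `c ((Z³ - Z x³) / x⁵) (Z x / y) + Z / (x y)`
as an element of `R[1/x]` plus one of `R[1/y]`; in characteristic `5` it equals
`H / x¹⁹ + E / y⁴` for explicit polynomials `H`, `E`, as one checks after clearing denominators.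
-/

instance : Fact (Nat.Prime 5) := ⟨by norm_num⟩

open MvPolynomial

open Finset

namespace WittVector

variable (p : ℕ) {R S : Type*} [CommRing R] [CommRing S]

def addCarry (a b : R) : R :=
  ∑ k ∈ Ioo 0 p, a ^ k * b ^ (p - k) * ((p.choose k / p : ℕ) : R)

variable {p}

theorem map_addCarry {F : Type*} [FunLike F R S] [RingHomClass F R S] (f : F) (a b : R) :
    f (addCarry p a b) = addCarry p (f a) (f b) := by
  simp [addCarry, map_sum]

theorem addCarry_five (a b : R) :
    addCarry 5 a b = a ^ 4 * b + 2 * a ^ 3 * b ^ 2 + 2 * a ^ 2 * b ^ 3 + a * b ^ 4 := by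
  rw [addCarry, show Ioo 0 5 = {1, 2, 3, 4} from rfl, sum_insert (by decide),
    sum_insert (by decide), sum_insert (by decide), sum_singleton]
  norm_num [Nat.choose]
  ring

variable [hp : Fact p.Prime]

local notation "𝕎" => WittVector p

theorem wittAdd_one :
    wittAdd p 1 = X (0, 1) + X (1, 1) - addCarry p (X (0, 0)) (X (1, 0)) := by
  have key := wittStructureInt_prop p (X 0 + X 1 : MvPolynomial (Fin 2) ℤ) 1
  simp only [wittPolynomial_one, map_add, map_mul, map_pow, bind₁_X_right,
    rename_X, map_natCast] at key
  have h0 : wittStructureInt p (X 0 + X 1 : MvPolynomial (Fin 2) ℤ) 0 = X (0, 0) + X (1, 0) :=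
    wittAdd_zero p
  rw [h0, add_pow_prime_eq' hp.out] at key
  have hp0 : (p : MvPolynomial (Fin 2 × ℕ) ℤ) ≠ 0 := by exact_mod_cast hp.out.ne_zero
  apply mul_left_cancel₀ hp0
  change _ * wittStructureInt p (X 0 + X 1) 1 = _
  rw [addCarry]
  linear_combination key

theorem add_coeff_one (x y : 𝕎 R) :
    (x + y).coeff 1 = x.coeff 1 + y.coeff 1 - addCarry p (x.coeff 0) (y.coeff 0) := by
  rw [add_coeff, wittAdd_one, peval, map_sub, map_add, map_addCarry]
  simp [Function.uncurry]

theorem coeff_sub_eq_zero_of_coeff_eq {n : ℕ} {x y : 𝕎 R} (h : ∀ i < n, x.coeff i = y.coeff i)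
    (i : ℕ) (hi : i < n) : (x - y).coeff i = 0 := by
  have : truncate n x = truncate n y :=
    TruncatedWittVector.ext fun j => by rw [coeff_truncate, coeff_truncate, h j j.2]
  rw [← coeff_truncate (n := n) (x - y) ⟨i, hi⟩, map_sub, this, sub_self,
    TruncatedWittVector.coeff_zero]

theorem coeff_teichmuller_add_verschiebung (a b : R) (n : ℕ) :
    (teichmuller p a + verschiebung (teichmuller p b)).coeff n =
      if n = 0 then a else if n = 1 then b else 0 := by
  have disjoint (m : ℕ) :
      (teichmuller p a).coeff m = 0 ∨ (verschiebung (teichmuller p b)).coeff m = 0 := by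
    rcases m with _ | m
    · exact Or.inr (verschiebung_coeff_zero _)
    · exact Or.inl (teichmuller_coeff_pos p a _ m.succ_pos)
  rw [coeff_add_of_disjoint _ _ _ disjoint]
  rcases n with _ | _ | n
  · simp
  · simp
  · simp [teichmuller_coeff_pos, verschiebung_coeff_succ]

theorem coeff_teichmuller_add_verschiebung_mem {T : Set R} {a b : R} (h0 : 0 ∈ T) (ha : a ∈ T)
    (hb : b ∈ T) (n : ℕ) : (teichmuller p a + verschiebung (teichmuller p b)).coeff n ∈ T := by
  rw [coeff_teichmuller_add_verschiebung]
  split_ifs <;> assumption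

theorem teichmuller_add_verschiebung_sub_eq_zero_of_lt_two {a b c e f : R}
    (h : addCarry p a b + c = e + f) (i : ℕ) (hi : i < 2) :
    (teichmuller p (a + b) + verschiebung (teichmuller p c)
      - (teichmuller p a + verschiebung (teichmuller p e))
      - (teichmuller p b + verschiebung (teichmuller p f))).coeff i = 0 := by
  rw [sub_sub]
  refine coeff_sub_eq_zero_of_coeff_eq ?_ i hi
  rintro (_ | _ | j) hj
  · rw [add_coeff_zero, add_coeff_zero, add_coeff_zero, add_coeff_zero]
    simp only [teichmuller_coeff_zero, verschiebung_coeff_zero, add_zero]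
  · rw [coeff_teichmuller_add_verschiebung, add_coeff_one]
    simp only [coeff_teichmuller_add_verschiebung, zero_add, one_ne_zero, ↓reduceIte]
    linear_combination h
  · omega

end WittVector

open WittVector

namespace AlphaFiveE8

variable {S : Type*} [CommRing S] {x z ix iy : S}

theorem mul_pow_mul_pow_of_mul_eq_one (h : x * ix = 1) (a : S) (n : ℕ) :
    a * ix ^ n * x ^ n = a := by
  rw [mul_assoc, ← mul_pow, mul_comm ix, h, one_pow, mul_one]

theorem split_coeff_zero (hx : x * ix = 1) (hy : (z ^ 2 + x ^ 3) * iy = 1) :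
    z ^ 5 * ix ^ 5 * iy = (z ^ 3 - z * x ^ 3) * ix ^ 5 + z * x * iy := by
  refine ((IsUnit.of_mul_eq_one ix hx).pow 5 |>.mul
    (IsUnit.of_mul_eq_one iy hy)).mul_right_cancel ?_
  calc z ^ 5 * ix ^ 5 * iy * (x ^ 5 * (z ^ 2 + x ^ 3))
      = z ^ 5 * (x * ix) ^ 5 * ((z ^ 2 + x ^ 3) * iy) := by ring
    _ = (z ^ 3 - z * x ^ 3) * (x * ix) ^ 5 * (z ^ 2 + x ^ 3)
          + z * x * ((z ^ 2 + x ^ 3) * iy) * x ^ 5 := by rw [hx, hy]; ring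
    _ = ((z ^ 3 - z * x ^ 3) * ix ^ 5 + z * x * iy) * (x ^ 5 * (z ^ 2 + x ^ 3)) := by ring

theorem split_coeff_one (h5 : (5 : S) = 0) (hx : x * ix = 1) (hy : (z ^ 2 + x ^ 3) * iy = 1) :
    addCarry 5 ((z ^ 3 - z * x ^ 3) * ix ^ 5) (z * x * iy) + z * ix * iy =
      (z ^ 11 + 3 * x ^ 6 * z ^ 7 + 2 * x ^ 12 * z ^ 3 + 4 * x ^ 15 * z) * ix ^ 19
        + (x ^ 2 * z ^ 5 + 2 * x ^ 8 * z) * iy ^ 4 := by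
  set y := z ^ 2 + x ^ 3
  set f := (z ^ 3 - z * x ^ 3) * ix ^ 5
  set g := z * x * iy
  set c := z * ix * iy
  set h := (z ^ 11 + 3 * x ^ 6 * z ^ 7 + 2 * x ^ 12 * z ^ 3 + 4 * x ^ 15 * z) * ix ^ 19
  set e := (x ^ 2 * z ^ 5 + 2 * x ^ 8 * z) * iy ^ 4
  have hf : f * x ^ 5 = z ^ 3 - z * x ^ 3 := mul_pow_mul_pow_of_mul_eq_one hx _ _
  have hg : g * y = z * x := by rw [mul_assoc, mul_comm iy, hy, mul_one]
  have hc : c * (x * y) = z := by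
    rw [show c * (x * y) = z * (x * ix) * (y * iy) by ring, hx, hy]; ring
  have hh : h * x ^ 19 = z ^ 11 + 3 * x ^ 6 * z ^ 7 + 2 * x ^ 12 * z ^ 3 + 4 * x ^ 15 * z :=
    mul_pow_mul_pow_of_mul_eq_one hx _ _
  have he : e * y ^ 4 = x ^ 2 * z ^ 5 + 2 * x ^ 8 * z :=
    mul_pow_mul_pow_of_mul_eq_one hy _ _
  refine ((IsUnit.of_mul_eq_one ix hx).pow 20 |>.mul
    ((IsUnit.of_mul_eq_one iy hy).pow 4)).mul_right_cancel ?_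
  rw [addCarry_five]
  calc (f ^ 4 * g + 2 * f ^ 3 * g ^ 2 + 2 * f ^ 2 * g ^ 3 + f * g ^ 4 + c) * (x ^ 20 * y ^ 4)
      = (f * x ^ 5) ^ 4 * (g * y) * y ^ 3 + 2 * (f * x ^ 5) ^ 3 * (g * y) ^ 2 * x ^ 5 * y ^ 2
        + 2 * (f * x ^ 5) ^ 2 * (g * y) ^ 3 * x ^ 10 * y + (f * x ^ 5) * (g * y) ^ 4 * x ^ 15
        + c * (x * y) * x ^ 19 * y ^ 3 := by ring
    _ = (z ^ 3 - z * x ^ 3) ^ 4 * (z * x) * y ^ 3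
        + 2 * (z ^ 3 - z * x ^ 3) ^ 3 * (z * x) ^ 2 * x ^ 5 * y ^ 2
        + 2 * (z ^ 3 - z * x ^ 3) ^ 2 * (z * x) ^ 3 * x ^ 10 * y
        + (z ^ 3 - z * x ^ 3) * (z * x) ^ 4 * x ^ 15 + z * x ^ 19 * y ^ 3 := by
      rw [hf, hg, hc]
    _ = (z ^ 11 + 3 * x ^ 6 * z ^ 7 + 2 * x ^ 12 * z ^ 3 + 4 * x ^ 15 * z) * x * y ^ 4
        + (x ^ 2 * z ^ 5 + 2 * x ^ 8 * z) * x ^ 20 := by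
      -- over `ℤ` the two sides differ by `5 ·` this polynomial
      linear_combination (-(x ^ 4 * z ^ 17 + 2 * x ^ 7 * z ^ 15 + 3 * x ^ 10 * z ^ 13
        + 4 * x ^ 13 * z ^ 11 + 5 * x ^ 16 * z ^ 9 + 6 * x ^ 19 * z ^ 7 + 6 * x ^ 22 * z ^ 5
        + 3 * x ^ 25 * z ^ 3 + x ^ 28 * z)) * h5
    _ = (h + e) * (x ^ 20 * y ^ 4) := by rw [← hh, ← he]; ring

end AlphaFiveE8

open AlphaFiveE8 in
theorem alpha5_quotient_E8_pullback_general (k : Type) [Field k] [CharP k 5]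
    (q : MvPolynomial (Fin 2) k) (hq : q = X 1 ^ 2 + X 0 ^ 3)
    (ι : MvPolynomial (Fin 2) k →+*
      Localization.Away ((X 0 : MvPolynomial (Fin 2) k) * q))
    (uX uq : (Localization.Away ((X 0 : MvPolynomial (Fin 2) k) * q))ˣ)
    (huX : (uX : Localization.Away ((X 0 : MvPolynomial (Fin 2) k) * q)) = ι (X 0))
    (huq : (uq : Localization.Away ((X 0 : MvPolynomial (Fin 2) k) * q)) = ι q)
    (w : WittVector 5 (Localization.Away ((X 0 : MvPolynomial (Fin 2) k) * q)))
    (hw : w = WittVector.teichmuller 5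
      (ι (X 1 ^ 5) *
        (↑uX⁻¹ : Localization.Away ((X 0 : MvPolynomial (Fin 2) k) * q)) ^ 5 *
        (↑uq⁻¹ : Localization.Away ((X 0 : MvPolynomial (Fin 2) k) * q)))) :
    ∃ u v : WittVector 5 (Localization.Away ((X 0 : MvPolynomial (Fin 2) k) * q)),
      (∀ i : ℕ, ∃ (s : MvPolynomial (Fin 2) k) (t : ℕ),
        u.coeff i * ι (X 0) ^ t = ι s) ∧
      (∀ i : ℕ, ∃ (s : MvPolynomial (Fin 2) k) (t : ℕ),
        v.coeff i * ι q ^ t = ι s) ∧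
      ∀ i < 2, (w + WittVector.verschiebung
        (WittVector.teichmuller 5
          ((ι (X 1) * ↑uX⁻¹ * ↑uq⁻¹ :
            Localization.Away ((X 0 : MvPolynomial (Fin 2) k) * q)))) - u - v).coeff i
        = 0 := by
  have h5 : (5 : Localization.Away ((X 0 : MvPolynomial (Fin 2) k) * q)) = 0 := by
    rw [← map_ofNat ι 5, ← map_ofNat C 5]
    simp [CharP.ofNat_eq_zero]
  have hQ' : ι q * ↑uq⁻¹ = 1 := huq ▸ uq.mul_inv
  set x := ι (X 0)
  set z := ι (X 1)
  set ix := (↑uX⁻¹ : Localization.Away ((X 0 : MvPolynomial (Fin 2) k) * q))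
  set iq := (↑uq⁻¹ : Localization.Away ((X 0 : MvPolynomial (Fin 2) k) * q))
  have hX : x * ix = 1 := huX ▸ uX.mul_inv
  have hQ : (z ^ 2 + x ^ 3) * iq = 1 := by simpa [hq] using hQ'
  refine ⟨teichmuller 5 ((z ^ 3 - z * x ^ 3) * ix ^ 5) + verschiebung (teichmuller 5
      ((z ^ 11 + 3 * x ^ 6 * z ^ 7 + 2 * x ^ 12 * z ^ 3 + 4 * x ^ 15 * z) * ix ^ 19)),
    teichmuller 5 (z * x * iq) + verschiebung (teichmuller 5
      ((x ^ 2 * z ^ 5 + 2 * x ^ 8 * z) * iq ^ 4)), ?_, ?_, ?_⟩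
  · refine coeff_teichmuller_add_verschiebung_mem (T := {l | ∃ s t, l * x ^ t = ι s})
      ⟨0, 0, by simp⟩ ⟨X 1 ^ 3 - X 1 * X 0 ^ 3, 5, ?_⟩
      ⟨X 1 ^ 11 + 3 * X 0 ^ 6 * X 1 ^ 7 + 2 * X 0 ^ 12 * X 1 ^ 3 + 4 * X 0 ^ 15 * X 1, 19, ?_⟩ <;>
    · rw [mul_pow_mul_pow_of_mul_eq_one hX]
      simp [x, z, map_ofNat]
  · refine coeff_teichmuller_add_verschiebung_mem (T := {l | ∃ s t, l * ι q ^ t = ι s})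
      ⟨0, 0, by simp⟩ ⟨X 1 * X 0, 1, ?_⟩ ⟨X 0 ^ 2 * X 1 ^ 5 + 2 * X 0 ^ 8 * X 1, 4, ?_⟩
    · simpa [x, z] using mul_pow_mul_pow_of_mul_eq_one hQ' (z * x) 1
    · rw [mul_pow_mul_pow_of_mul_eq_one hQ']
      simp [x, z, map_ofNat]
  · intro i hi
    rw [hw, map_pow, split_coeff_zero hX hQ]
    exact teichmuller_add_verschiebung_sub_eq_zero_of_lt_two (split_coeff_one h5 hX hQ) i hi

/-- **Pullback of the local cohomology class along the `α₅`-quotient with an `E₈^0`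
singularity** (char 5, `x = X⁵`, `y = Z² + X³`, `z = Z⁵`).
Let `R = k[X,Z]`, `q = Z² + X³`, `L = R[1/(Xq)]`, and `w = τ(Z⁵ X⁻⁵ q⁻¹) ∈ W(L)`
(5-typical).  Then `w ≡ −V(τ(Z X⁻¹ q⁻¹))`, i.e. `w + V(τ(Z X⁻¹ q⁻¹)) ≡ 0`, in `W₂`
modulo `W₂(R[1/X]) + W₂(R[1/q])`. -/
theorem alpha5_quotient_E8_pullback (k : Type) [Field k] [CharP k 5]
    (q : MvPolynomial (Fin 2) k) (hq : q = X 1 ^ 2 + X 0 ^ 3)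
    (ι : MvPolynomial (Fin 2) k →+*
      Localization.Away ((X 0 : MvPolynomial (Fin 2) k) * q))
    (hι : ι = algebraMap _ _)
    (uX uq : (Localization.Away ((X 0 : MvPolynomial (Fin 2) k) * q))ˣ)
    (huX : (uX : Localization.Away ((X 0 : MvPolynomial (Fin 2) k) * q)) = ι (X 0))
    (huq : (uq : Localization.Away ((X 0 : MvPolynomial (Fin 2) k) * q)) = ι q)
    (w : WittVector 5 (Localization.Away ((X 0 : MvPolynomial (Fin 2) k) * q)))
    (hw : w = WittVector.teichmuller 5
      (ι (X 1 ^ 5) *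
        (↑uX⁻¹ : Localization.Away ((X 0 : MvPolynomial (Fin 2) k) * q)) ^ 5 *
        (↑uq⁻¹ : Localization.Away ((X 0 : MvPolynomial (Fin 2) k) * q)))) :
    ∃ u v : WittVector 5 (Localization.Away ((X 0 : MvPolynomial (Fin 2) k) * q)),
      (∀ i : ℕ, ∃ (s : MvPolynomial (Fin 2) k) (t : ℕ),
        u.coeff i * ι (X 0) ^ t = ι s) ∧
      (∀ i : ℕ, ∃ (s : MvPolynomial (Fin 2) k) (t : ℕ),
        v.coeff i * ι q ^ t = ι s) ∧
      ∀ i < 2, (w + WittVector.verschiebung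
        (WittVector.teichmuller 5
          ((ι (X 1) * ↑uX⁻¹ * ↑uq⁻¹ :
            Localization.Away ((X 0 : MvPolynomial (Fin 2) k) * q)))) - u - v).coeff i
        = 0 :=
  alpha5_quotient_E8_pullback_general k q hq ι uX uq huX huq w hw
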